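/- Let H, F, N, r₀ be real numbers with H ≠ 0, r₀ > 0, F² ≤ 1, δ ≥ 0 and r₀(F−1)/2 ≤ HN ≤ r₀(F+1)/2. Then 0 ≤ P₁ and P₂ ≤ r₀/H², i.e. the interval [P₁, P₂] is contained in [0, r₀/H²]. -/
import Mathlib


/-- The discriminant quantity
`δ = (1-F²)(r₀(1+F) - 2HN)(r₀(1-F) + 2HN)`. -/
def srDelta (H F N r0 : ℝ) : ℝ :=
  (1 - F ^ 2) * (r0 * (1 + F) - 2 * H * N) * (r0 * (1 - F) + 2 * H * N)

/-- The smaller root `P₁` of `Ξ`. -/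
noncomputable def srP1 (H F N r0 : ℝ) : ℝ :=
  ((2 * H * F * N + r0 * (1 - F ^ 2)) - Real.sqrt (srDelta H F N r0)) /
    (2 * H ^ 2)

/-- The larger root `P₂` of `Ξ`. -/
noncomputable def srP2 (H F N r0 : ℝ) : ℝ :=
  ((2 * H * F * N + r0 * (1 - F ^ 2)) + Real.sqrt (srDelta H F N r0)) /
    (2 * H ^ 2)

/-- Under `H ≠ 0`, `r₀ > 0`, `F² ≤ 1`, `δ ≥ 0` and
`r₀(F-1)/2 ≤ HN ≤ r₀(F+1)/2`, the interval `[P₁, P₂]` is contained in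
`[0, r₀/H²]`. -/
theorem stmt_16 (H F N r0 : ℝ) (hH : H ≠ 0) (hr0 : 0 < r0) (hF : F ^ 2 ≤ 1)
    (hδ : 0 ≤ srDelta H F N r0)
    (hlo : r0 * (F - 1) / 2 ≤ H * N) (hhi : H * N ≤ r0 * (F + 1) / 2) :
    0 ≤ srP1 H F N r0 ∧ srP2 H F N r0 ≤ r0 / H ^ 2 := by
  have hH2 : (0:ℝ) < 2 * H ^ 2 := by positivity
  set b := 2 * H * F * N + r0 * (1 - F ^ 2) with hb_def
  have hb : 0 ≤ b := by
    rcases le_or_gt 0 F with hFpos | hFneg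
    · nlinarith [mul_le_mul_of_nonneg_left hlo hFpos]
    · nlinarith [mul_le_mul_of_nonpos_left hhi hFneg.le]
  have hdb : srDelta H F N r0 = b ^ 2 - 4 * H ^ 2 * N ^ 2 := by
    simp only [srDelta, hb_def]; ring
  have hs1 : Real.sqrt (srDelta H F N r0) ≤ b := by
    have : srDelta H F N r0 ≤ b ^ 2 := by nlinarith
    calc Real.sqrt (srDelta H F N r0) ≤ Real.sqrt (b ^ 2) := Real.sqrt_le_sqrt this
      _ = b := by rw [Real.sqrt_sq hb]
  have hb2 : 0 ≤ 2 * r0 - b := by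
    rcases le_or_gt 0 F with hFpos | hFneg
    · nlinarith [mul_le_mul_of_nonneg_left hhi hFpos]
    · nlinarith [mul_le_mul_of_nonpos_left hlo hFneg.le]
  have hs2 : Real.sqrt (srDelta H F N r0) ≤ 2 * r0 - b := by
    have : srDelta H F N r0 ≤ (2 * r0 - b) ^ 2 := by nlinarith [sq_nonneg (r0 * F - H * N)]
    calc Real.sqrt (srDelta H F N r0) ≤ Real.sqrt ((2 * r0 - b) ^ 2) := Real.sqrt_le_sqrt this
      _ = 2 * r0 - b := by rw [Real.sqrt_sq hb2]
  constructor
  · unfold srP1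
    apply div_nonneg _ hH2.le
    linarith
  · unfold srP2
    rw [div_le_div_iff₀ hH2 (by positivity)]
    nlinarith
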